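/- Let Z : ℝ → ℂ be three times continuously differentiable and 1-periodic with Z′(s) ≠ 0 for all s ∈ ℝ, and for a positive integer n define Z_n : ℝ → ℂ by Z_n(s) := (1/n) Z(n s). Then the Euler–Bernoulli energy satisfies ∫₀¹ {Z_n, s}_SD ds = n² ∫₀¹ {Z, s}_SD ds, i.e., E[Z_n] = n² E[Z]. -/

import Mathlib

/-- The Schwarz derivative `{Z, s}_SD := ∂_s (Z''/Z') - (1/2) (Z''/Z')²` of a
function `Z : ℝ → ℂ`. -/
noncomputable def schwarzDeriv (Z : ℝ → ℂ) (s : ℝ) : ℂ :=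
  deriv (fun t => deriv (deriv Z) t / deriv Z t) s -
    (1 / 2) * (deriv (deriv Z) s / deriv Z s) ^ 2

lemma hasDerivAt_comp_mul (f : ℝ → ℂ) (hf : Differentiable ℝ f) (c s : ℝ) :
    HasDerivAt (fun t => f (c * t)) ((c : ℂ) * deriv f (c * s)) s := by
  have h1 : HasDerivAt (fun t : ℝ => c * t) c s := by
    simpa using (hasDerivAt_id s).const_mul c
  have h3 := HasDerivAt.scomp s (hf (c * s)).hasDerivAt h1
  simpa [Function.comp_def, Complex.real_smul] using h3

lemma deriv_comp_mul (f : ℝ → ℂ) (hf : Differentiable ℝ f) (c s : ℝ) :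
    deriv (fun t => f (c * t)) s = (c : ℂ) * deriv f (c * s) :=
  (hasDerivAt_comp_mul f hf c s).deriv

lemma periodic_deriv' (f : ℝ → ℂ) (hf : Function.Periodic f 1) :
    Function.Periodic (deriv f) 1 := by
  intro s
  have h : (fun t : ℝ => f (t + 1)) = f := funext hf
  calc deriv f (s + 1) = deriv (fun t => f (t + 1)) s := (deriv_comp_add_const f 1 s).symm
    _ = deriv f s := by rw [h]

theorem energy_winding_loop_soliton
    (Z : ℝ → ℂ) (hZ : ContDiff ℝ 3 Z)
    (hper : ∀ s : ℝ, Z (s + 1) = Z s)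
    (hne : ∀ s : ℝ, deriv Z s ≠ 0)
    (n : ℕ) (hn : 0 < n) :
    ∫ s in (0:ℝ)..1, schwarzDeriv (fun t : ℝ => (1 / (n : ℂ)) * Z ((n : ℝ) * t)) s =
      (n : ℂ) ^ 2 * ∫ s in (0:ℝ)..1, schwarzDeriv Z s := by
  have hnR : (n : ℝ) ≠ 0 := Nat.cast_ne_zero.mpr hn.ne'
  have hnC : (n : ℂ) ≠ 0 := Nat.cast_ne_zero.mpr hn.ne'
  -- differentiability bookkeeping
  have hZ' : ContDiff ℝ 2 (deriv Z) := by
    have := (contDiff_succ_iff_deriv.mp (show ContDiff ℝ (2 + 1) Z from hZ)).2.2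
    exact this
  have hZ'' : ContDiff ℝ 1 (deriv (deriv Z)) := by
    have := (contDiff_succ_iff_deriv.mp (show ContDiff ℝ (1 + 1) (deriv Z) from hZ')).2.2
    exact this
  have hdZ : Differentiable ℝ Z := hZ.differentiable (by norm_num)
  have hdZ' : Differentiable ℝ (deriv Z) := hZ'.differentiable (by norm_num)
  have hdZ'' : Differentiable ℝ (deriv (deriv Z)) := hZ''.differentiable (by norm_num)
  set W : ℝ → ℂ := fun s => deriv (deriv Z) s / deriv Z s with hW
  have hdW : Differentiable ℝ W := fun s => ((hdZ'' s).div (hdZ' s) (hne s))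
  -- the rescaled loop
  set Zn : ℝ → ℂ := fun t : ℝ => (1 / (n : ℂ)) * Z ((n : ℝ) * t) with hZn
  -- first derivative
  have h1 : deriv Zn = fun s => deriv Z ((n : ℝ) * s) := by
    funext s
    have h := ((hasDerivAt_comp_mul Z hdZ (n : ℝ) s).const_mul (1 / (n : ℂ)))
    have hc : (1 / (n : ℂ)) * (((n : ℝ) : ℂ) * deriv Z ((n : ℝ) * s))
        = deriv Z ((n : ℝ) * s) := by
      push_cast
      field_simp
    rw [hZn]
    rw [h.deriv, hc]
  -- second derivative
  have h2 : deriv (deriv Zn) = fun s => ((n : ℝ) : ℂ) * deriv (deriv Z) ((n : ℝ) * s) := by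
    funext s
    rw [h1, deriv_comp_mul (deriv Z) hdZ' (n : ℝ) s]
  -- ratio
  have h3 : (fun s => deriv (deriv Zn) s / deriv Zn s)
      = fun s => ((n : ℝ) : ℂ) * W ((n : ℝ) * s) := by
    funext s
    rw [h2, h1, hW]
    simp only [mul_div_assoc]
  -- Schwarz derivative scaling
  have hS : ∀ s : ℝ, schwarzDeriv Zn s = (n : ℂ) ^ 2 * schwarzDeriv Z ((n : ℝ) * s) := by
    intro s
    have hd : deriv (fun s => deriv (deriv Zn) s / deriv Zn s) s
        = ((n : ℝ) : ℂ) * (((n : ℝ) : ℂ) * deriv W ((n : ℝ) * s)) := by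
      rw [h3]
      exact ((hasDerivAt_comp_mul W hdW (n : ℝ) s).const_mul (((n : ℝ) : ℂ))).deriv
    unfold schwarzDeriv
    rw [hd, h2, h1]
    simp only [hW]
    push_cast
    ring
  -- regularity and periodicity of the Schwarzian
  have hWc1 : ContDiff ℝ 1 W := by
    have h : ContDiff ℝ 1 fun s => deriv (deriv Z) s * (deriv Z s)⁻¹ :=
      hZ''.mul ((hZ'.of_le (by norm_num : (1:WithTop ℕ∞) ≤ 2)).inv hne)
    simpa only [hW, div_eq_mul_inv] using h
  have hSeq : schwarzDeriv Z = fun s => deriv W s - 1 / 2 * (W s) ^ 2 := by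
    funext s; rw [schwarzDeriv, hW]
  have hScont : Continuous (schwarzDeriv Z) := by
    rw [hSeq]
    exact (hWc1.continuous_deriv le_rfl).sub (continuous_const.mul (hWc1.continuous.pow 2))
  have hZper : Function.Periodic Z 1 := hper
  have hZ'per : Function.Periodic (deriv Z) 1 := periodic_deriv' Z hZper
  have hZ''per : Function.Periodic (deriv (deriv Z)) 1 := periodic_deriv' _ hZ'per
  have hWper : Function.Periodic W 1 := by
    intro s; simp only [hW]; rw [hZ'per s, hZ''per s]
  have hW'per : Function.Periodic (deriv W) 1 := periodic_deriv' W hWper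
  have hSper : Function.Periodic (schwarzDeriv Z) 1 := by
    intro s; rw [hSeq]; simp only; rw [hWper s, hW'per s]
  have hint : ∀ t₁ t₂ : ℝ, IntervalIntegrable (schwarzDeriv Z) MeasureTheory.volume t₁ t₂ :=
    fun t₁ t₂ => hScont.intervalIntegrable t₁ t₂
  have key : (∫ s in (0:ℝ)..1, schwarzDeriv Z ((n : ℝ) * s))
      = ∫ s in (0:ℝ)..1, schwarzDeriv Z s := by
    rw [intervalIntegral.integral_comp_mul_left _ hnR]
    have h0 : (n : ℝ) * 0 = 0 := by ring
    have h1' : (n : ℝ) * 1 = (0 : ℝ) + (n : ℤ) • (1 : ℝ) := by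
      rw [zsmul_eq_mul]; push_cast; ring
    rw [h0, h1', hSper.intervalIntegral_add_zsmul_eq n 0 hint, zero_add]
    rw [zsmul_eq_mul, Complex.real_smul]
    push_cast
    field_simp
  have hcongr : (∫ s in (0:ℝ)..1, schwarzDeriv Zn s)
      = ∫ s in (0:ℝ)..1, (n : ℂ) ^ 2 * schwarzDeriv Z ((n : ℝ) * s) := by
    simp only [hS]
  rw [hcongr, intervalIntegral.integral_const_mul, key]
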